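/- For f = x_0 x_2³ + x_1 x_2² x_3 + x_3⁴ in four variables, Hess(f) = 9 x_2⁸, i.e., the Hessian is the 8-th power of a linear form up to a nonzero scalar; moreover f has no linear factor. -/

import Mathlib

/-!
No monomial of `f` has degree more than one in `x₀, x₁` together, so the Hessian matrix has a
`2 × 2` zero block in its upper left corner and its determinant is the square of the determinant
`3 x₂⁴` of the off-diagonal block.

A linear factor `l` of `f` has no zero on a curve along which `f` is a nonzero constant, so `l`
restricted to such a curve, if affine in the parameter, is constant. The lines `(t, 0, 0, 1)`,
`(0, t, 0, 1)`, `(0, 0, t, 1)` and then the curve `(1 - t⁴, 0, 1, t)` kill the linear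
coefficients of `l` one after the other, so `l` would be constant.
-/

open MvPolynomial

/-- The Hessian determinant: determinant of the matrix of second partial derivatives. -/
noncomputable def hess {d : ℕ} (f : MvPolynomial (Fin d) ℂ) : MvPolynomial (Fin d) ℂ :=
  Matrix.det (Matrix.of fun i j : Fin d => MvPolynomial.pderiv i (MvPolynomial.pderiv j f))

namespace MvPolynomial

variable {σ R : Type*}

theorem eq_C_add_sum_C_mul_X_of_totalDegree_le_one [Fintype σ] [CommSemiring R]
    {p : MvPolynomial σ R} (h : p.totalDegree ≤ 1) :
    p = C (coeff 0 p) + ∑ i, C (coeff (Finsupp.single i 1) p) * X i := by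
  classical
  ext m
  simp only [coeff_add, coeff_C, coeff_sum, coeff_C_mul, coeff_X]
  rcases Nat.lt_or_ge m.degree 2 with hm | hm
  · interval_cases hdeg : m.degree
    · obtain rfl := (Finsupp.degree_eq_zero_iff m).mp hdeg
      simp
    · obtain ⟨a, rfl⟩ := (Finsupp.sum_eq_one_iff m).mp hdeg
      simp [Finsupp.single_eq_single_iff, eq_comm (a := (0 : σ →₀ ℕ))]
  · have hm0 : 0 ≠ m := by rintro rfl; simp at hm
    have hm1 (i : σ) : Finsupp.single i 1 ≠ m := by rintro rfl; simp at hm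
    have hp : coeff m p = 0 := coeff_eq_zero_of_totalDegree_lt (by
      rw [← Finsupp.degree_apply]; omega)
    simp [hp, hm0, hm1]

theorem slope_eq_zero_of_dvd_of_forall_eval_ne_zero {K : Type*} [Field K]
    {l f : MvPolynomial σ K} (hdvd : l ∣ f) (γ : K → σ → K) {c b : K}
    (hl : ∀ t, eval (γ t) l = c + b * t) (hf : ∀ t, eval (γ t) f ≠ 0) : b = 0 := by
  by_contra hb
  obtain ⟨g, rfl⟩ := hdvd
  apply hf (-c / b)
  rw [eval_mul, hl, mul_div_cancel₀ _ hb, add_neg_cancel, zero_mul]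

end MvPolynomial

noncomputable def quartic (K : Type*) [Field K] : MvPolynomial (Fin 4) K :=
  X 0 * X 2 ^ 3 + X 1 * X 2 ^ 2 * X 3 + X 3 ^ 4

theorem not_exists_linear_dvd_quartic (K : Type*) [Field K] :
    ¬ ∃ l g : MvPolynomial (Fin 4) K, l.totalDegree = 1 ∧ quartic K = l * g := by
  rintro ⟨l, g, hdeg, hfg⟩
  have hdvd : l ∣ quartic K := ⟨g, hfg⟩
  set a : Fin 4 → K := fun i => coeff (Finsupp.single i 1) l
  set c := coeff 0 l
  have hl : l = C c + ∑ i, C (a i) * X i := eq_C_add_sum_C_mul_X_of_totalDegree_le_one hdeg.le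
  have heval (p : Fin 4 → K) :
      eval p l = c + (a 0 * p 0 + a 1 * p 1 + a 2 * p 2 + a 3 * p 3) := by
    rw [hl]; simp [Fin.sum_univ_four]
  have h0 : a 0 = 0 := slope_eq_zero_of_dvd_of_forall_eval_ne_zero hdvd (fun t => ![t, 0, 0, 1])
    (c := c + a 3) (fun t => by simp [heval]; ring) (fun t => by simp [quartic])
  have h1 : a 1 = 0 := slope_eq_zero_of_dvd_of_forall_eval_ne_zero hdvd (fun t => ![0, t, 0, 1])
    (c := c + a 3) (fun t => by simp [heval]; ring) (fun t => by simp [quartic])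
  have h2 : a 2 = 0 := slope_eq_zero_of_dvd_of_forall_eval_ne_zero hdvd (fun t => ![0, 0, t, 1])
    (c := c + a 3) (fun t => by simp [heval]; ring) (fun t => by simp [quartic])
  have h3 : a 3 = 0 := slope_eq_zero_of_dvd_of_forall_eval_ne_zero hdvd
    (fun t => ![1 - t ^ 4, 0, 1, t]) (c := c)
    (fun t => by simp [heval, h0, h2]) (fun t => by simp [quartic])
  have hC : l = C c := by simp [hl, Fin.sum_univ_four, h0, h1, h2, h3]
  simp [hC] at hdeg

theorem hess_quartic : hess (quartic ℂ) = C 9 * X 2 ^ 8 := by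
  have hmat : (Matrix.of fun i j : Fin 4 => pderiv i (pderiv j (quartic ℂ))) =
      !![0, 0, 3 * X 2 ^ 2, 0;
         0, 0, 2 * X 2 * X 3, X 2 ^ 2;
         3 * X 2 ^ 2, 2 * X 2 * X 3, 6 * X 0 * X 2 + 2 * X 1 * X 3, 2 * X 1 * X 2;
         0, X 2 ^ 2, 2 * X 1 * X 2, 12 * X 3 ^ 2] := by
    refine Matrix.ext fun i j => ?_
    fin_cases i <;> fin_cases j <;>
      simp [quartic, pderiv_X, Pi.single_apply, Derivation.map_natCast, -Nat.cast_ofNat] <;> ring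
  rw [hess, hmat, Matrix.det_succ_row_zero, map_ofNat C 9]
  simp [Fin.sum_univ_succ, Fin.succAbove, Matrix.det_fin_three]
  ring

theorem stmt_14 (f : MvPolynomial (Fin 4) ℂ)
    (hf : f = X 0 * X 2 ^ 3 + X 1 * X 2 ^ 2 * X 3 + X 3 ^ 4) :
    hess f = C 9 * X 2 ^ 8
    ∧ ¬ ∃ l g : MvPolynomial (Fin 4) ℂ, l.totalDegree = 1 ∧ f = l * g := by
  subst hf
  exact ⟨hess_quartic, not_exists_linear_dvd_quartic ℂ⟩
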